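/- Let t ∈ (0,1]. For all families (H_i)_{i∈ℤ}, (K_i)_{i∈ℤ} of complex Hilbert spaces with ℓ²-direct sums H, K, and every bounded linear operator T : H → K, there exists a bounded linear operator S : H → K whose matrix entries satisfy S_{ij} = φ_t(i,j)·T_{ij} for all i,j ∈ ℤ, and ‖S‖ ≤ (π·(t^{1/2} + t^{−1/2})/√3)·‖T‖. Here φ_t(i,j) := 1/[(i−j)/2]_t for i ≠ j and φ_t(i,i) := 0. -/

import Mathlib

open scoped ENNReal

/-- The `q`-number `[a]_t = (t^a - t^{-a})/(t - t⁻¹)` for `t ≠ 1`, and `a` for `t = 1`. -/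
noncomputable def qNum (t a : ℝ) : ℝ :=
  if t = 1 then a else (t ^ a - t ^ (-a)) / (t - t⁻¹)

/-- The Schur multiplier `φ_t(i,j) = 1/[(i−j)/2]_t` for `i ≠ j` and `φ_t(i,i) = 0`. -/
noncomputable def phiMul (t : ℝ) (i j : ℤ) : ℂ :=
  if i = j then 0 else ((qNum t (((i : ℝ) - (j : ℝ)) / 2))⁻¹ : ℝ)

variable {H K : ℤ → Type} [∀ i, NormedAddCommGroup (H i)] [∀ i, InnerProductSpace ℂ (H i)]
  [∀ i, CompleteSpace (H i)] [∀ i, NormedAddCommGroup (K i)] [∀ i, InnerProductSpace ℂ (K i)]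
  [∀ i, CompleteSpace (K i)]

/-- The `(i,j)` matrix entry `T_{ij} = P_i ∘ T ∘ ι_j : H_j → K_i` of a bounded operator
between ℓ²-direct sums. -/
noncomputable def matrixEntry (T : lp H 2 →L[ℂ] lp K 2) (i j : ℤ) (v : H j) : K i :=
  T (lp.single 2 j v) i

/-!
De Leeuw-type transference: for `g` integrable on the circle and `U_θ = diag(e_j(θ))_j`, the
operator `S = ∫ g(θ) U_θ⁻¹ T U_θ dθ` has entries `S_ij = ĝ(i - j) T_ij` and `‖S‖ ≤ ‖g‖₁ ‖T‖`.
So it suffices to find `g` with `ĝ(n) = φ_t(n, 0)`. With `s = t^{1/2}` one has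
`[n/2]_t ≥ |n| / (s + s⁻¹)`, hence
`∑ₙ |φ_t(n, 0)|² ≤ (s + s⁻¹)² ∑_{n ≠ 0} n⁻² = (π (s + s⁻¹) / √3)²`.
By Riesz–Fischer such a `g ∈ L²` exists, and `‖g‖₁ ≤ ‖g‖₂ = ‖φ_t(·, 0)‖_{ℓ²}`.
-/

open Real

lemma qNum_neg (t a : ℝ) : qNum t (-a) = -qNum t a := by
  unfold qNum
  split_ifs <;> ring_nf

lemma natCast_mul_inv_sub_le_inv_pow_sub_pow {s : ℝ} (hs0 : 0 < s) (hs1 : s ≤ 1) (n : ℕ) :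
    n * (s⁻¹ - s) ≤ s⁻¹ ^ n - s ^ n := by
  induction n with
  | zero => simp
  | succ n ih =>
    have hsn : s ^ n ≤ 1 := pow_le_one₀ hs0.le hs1
    have hsn' : 1 ≤ s⁻¹ ^ n := one_le_pow₀ (one_le_inv₀ hs0 |>.2 hs1)
    have hss : s * s⁻¹ = 1 := mul_inv_cancel₀ hs0.ne'
    have hpow : s⁻¹ ^ n * s ^ n = 1 := by rw [← mul_pow, inv_mul_cancel₀ hs0.ne', one_pow]
    -- `(s⁻¹^(n+1) - s^(n+1)) - (s⁻¹^n - s^n) - (s⁻¹ - s)` is the right side minus the left side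
    have step : (1 - s ^ n) * (1 - s) ≤ (s⁻¹ ^ n - 1) * (s⁻¹ - 1) := by
      apply mul_le_mul <;> nlinarith
    push_cast
    rw [pow_succ, pow_succ]
    nlinarith

lemma qNum_sq_natCast_div_two {s : ℝ} (hs0 : 0 < s) (hs1 : s ≠ 1) (n : ℕ) :
    qNum (s ^ 2) (n / 2) = (s⁻¹ ^ n - s ^ n) / ((s⁻¹ - s) * (s + s⁻¹)) := by
  have hs2 : s ^ 2 ≠ 1 := by
    rwa [Ne, pow_eq_one_iff_of_nonneg hs0.le two_ne_zero]
  have hpow (x : ℝ) : (s ^ 2) ^ (x / 2) = s ^ x := by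
    rw [← Real.rpow_natCast s 2, ← Real.rpow_mul hs0.le]
    ring_nf
  rw [qNum, if_neg hs2, ← neg_div, hpow, hpow, Real.rpow_neg hs0.le, Real.rpow_natCast,
    ← inv_pow]
  have hden : s ^ 2 - (s ^ 2)⁻¹ = -((s⁻¹ - s) * (s + s⁻¹)) := by
    field_simp
    ring
  rw [hden, div_neg, ← neg_div, neg_sub]

lemma natCast_div_le_qNum_sq {s : ℝ} (hs0 : 0 < s) (hs1 : s ≤ 1) (n : ℕ) :
    n / (s + s⁻¹) ≤ qNum (s ^ 2) (n / 2) := by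
  rcases hs1.eq_or_lt with rfl | hs1'
  · norm_num [qNum]
  rw [qNum_sq_natCast_div_two hs0 hs1'.ne, ← div_div, div_le_div_iff_of_pos_right (by positivity),
    le_div_iff₀ (sub_pos.2 (hs1'.trans (one_lt_inv₀ hs0 |>.2 hs1')))]
  exact natCast_mul_inv_sub_le_inv_pow_sub_pow hs0 hs1 n

-- At `m = 0` both sides vanish (`x⁻¹` and `x / 0` are `0` at `0`).
lemma abs_inv_qNum_sq_le {s : ℝ} (hs0 : 0 < s) (hs1 : s ≤ 1) (m : ℤ) :
    |(qNum (s ^ 2) (m / 2))⁻¹| ≤ (s + s⁻¹) / |(m : ℝ)| := by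
  have key (n : ℕ) : |(qNum (s ^ 2) (n / 2))⁻¹| ≤ (s + s⁻¹) / n := by
    rcases n.eq_zero_or_pos with rfl | hn
    · simp [qNum]
    have hlow := natCast_div_le_qNum_sq hs0 hs1 n
    have hpos : 0 < (n : ℝ) / (s + s⁻¹) := by positivity
    rw [abs_of_pos (inv_pos.2 (hpos.trans_le hlow))]
    exact (inv_anti₀ hpos hlow).trans_eq (inv_div _ _)
  obtain ⟨n, rfl | rfl⟩ := m.eq_nat_or_neg
  · simpa using key n
  · simpa [neg_div, qNum_neg] using key n

lemma phiMul_sub_zero (t : ℝ) (i j : ℤ) : phiMul t (i - j) 0 = phiMul t i j := by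
  simp [phiMul, sub_eq_zero]

lemma norm_phiMul_sq_le {s : ℝ} (hs0 : 0 < s) (hs1 : s ≤ 1) (m : ℤ) :
    ‖phiMul (s ^ 2) m 0‖ ≤ (s + s⁻¹) / |(m : ℝ)| := by
  unfold phiMul
  split_ifs with hm
  · simp [hm]
  · simpa [Complex.norm_real] using abs_inv_qNum_sq_le hs0 hs1 m

-- `1 / 0 ^ 2 = 0` in Lean, so the term `m = 0` contributes nothing.
lemma hasSum_one_div_intCast_sq : HasSum (fun m : ℤ => 1 / (m : ℝ) ^ 2) (π ^ 2 / 3) := by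
  have h := hasSum_zeta_two.of_nat_of_neg (f := fun m : ℤ => 1 / (m : ℝ) ^ 2)
    (by simpa using hasSum_zeta_two)
  rwa [show π ^ 2 / 6 + π ^ 2 / 6 - 1 / ((0 : ℤ) : ℝ) ^ 2 = π ^ 2 / 3 by simp; ring] at h

lemma exists_lp_eq_phiMul_sq {s : ℝ} (hs0 : 0 < s) (hs1 : s ≤ 1) :
    ∃ c : lp (fun _ : ℤ => ℂ) 2, (∀ m, c m = phiMul (s ^ 2) m 0) ∧
      ‖c‖ ≤ π * (s + s⁻¹) / √3 := by
  set C := π * (s + s⁻¹) / √3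
  have hC : (s + s⁻¹) ^ 2 * (π ^ 2 / 3) = C ^ (2 : ℝ≥0∞).toReal := by
    rw [ENNReal.toReal_ofNat, Real.rpow_two, div_pow, mul_pow, Real.sq_sqrt zero_le_three]
    ring
  have hbound : HasSum (fun m : ℤ => (s + s⁻¹) ^ 2 * (1 / (m : ℝ) ^ 2))
      (C ^ (2 : ℝ≥0∞).toReal) :=
    hC ▸ hasSum_one_div_intCast_sq.mul_left _
  have hle (m : ℤ) : ‖phiMul (s ^ 2) m 0‖ ^ (2 : ℝ≥0∞).toReal ≤
      (s + s⁻¹) ^ 2 * (1 / (m : ℝ) ^ 2) := by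
    rw [ENNReal.toReal_ofNat, Real.rpow_two, ← sq_abs (m : ℝ), mul_one_div, ← div_pow]
    exact pow_le_pow_left₀ (norm_nonneg _) (norm_phiMul_sq_le hs0 hs1 m) 2
  have hsum : Summable fun m : ℤ => ‖phiMul (s ^ 2) m 0‖ ^ (2 : ℝ≥0∞).toReal :=
    hbound.summable.of_nonneg_of_le (fun _ => by positivity) hle
  refine ⟨⟨fun m => phiMul (s ^ 2) m 0, memℓp_gen hsum⟩, fun m => rfl, ?_⟩
  refine lp.norm_le_of_tsum_le (by norm_num) (by positivity) ?_
  exact (hsum.tsum_le_tsum hle hbound.summable).trans_eq hbound.tsum_eq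

section Transference

open MeasureTheory AddCircle

variable {T : ℝ}

section Modulation

variable {E : ℤ → Type*} [∀ i, NormedAddCommGroup (E i)] [∀ i, NormedSpace ℂ (E i)]

lemma norm_fourier_apply_smul {V : Type*} [NormedAddCommGroup V] [NormedSpace ℂ V]
    (n : ℤ) (θ : AddCircle T) (v : V) : ‖fourier n θ • v‖ = ‖v‖ := by
  rw [norm_smul, fourier_apply, Circle.norm_coe, one_mul]

lemma memℓp_fourier_smul (θ : AddCircle T) (x : lp E 2) :
    Memℓp (fun j => fourier j θ • x j) 2 :=
  memℓp_norm_iff.1 <| by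
    simpa only [norm_fourier_apply_smul] using memℓp_norm_iff.2 (lp.memℓp x)

noncomputable def fourierModulation (θ : AddCircle T) : lp E 2 →ₗᵢ[ℂ] lp E 2 where
  toFun x := ⟨fun j => fourier j θ • x j, memℓp_fourier_smul θ x⟩
  map_add' x y := lp.ext <| funext fun j => smul_add _ (x j) (y j)
  map_smul' c x := lp.ext <| funext fun j => smul_comm _ c (x j)
  norm_map' x := by
    show ‖(⟨_, memℓp_fourier_smul θ x⟩ : lp E 2)‖ = ‖x‖
    simp only [lp.norm_eq_tsum_rpow (p := 2) (by norm_num)]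
    congr! 4 with j
    exact norm_fourier_apply_smul j θ (x j)

lemma fourierModulation_apply (θ : AddCircle T) (x : lp E 2) (j : ℤ) :
    fourierModulation θ x j = fourier j θ • x j := rfl

lemma fourierModulation_single (θ : AddCircle T) (j : ℤ) (v : E j) :
    fourierModulation θ (lp.single 2 j v) = fourier j θ • lp.single 2 j v := by
  ext k
  rw [fourierModulation_apply, lp.coeFn_smul, Pi.smul_apply]
  rcases eq_or_ne k j with rfl | hk
  · rfl
  · rw [lp.single_apply_ne _ _ _ hk, smul_zero, smul_zero]

-- A uniform limit of trigonometric polynomials, obtained from the finite partial sums of `x`.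
lemma continuous_fourierModulation_apply (x : lp E 2) :
    Continuous fun θ : AddCircle T => fourierModulation θ x := by
  set partialSum : Finset ℤ → lp E 2 := fun F => ∑ j ∈ F, lp.single 2 j (x j)
  have hlim : TendstoUniformly (fun F θ => fourierModulation θ (partialSum F))
      (fun θ : AddCircle T => fourierModulation θ x) Filter.atTop := by
    rw [Metric.tendstoUniformly_iff]
    intro ε hε
    filter_upwards [Metric.tendsto_nhds.1 (lp.hasSum_single (by norm_num) x) ε hε] with F hF θ
    rwa [(fourierModulation θ).isometry.dist_eq, dist_comm]
  refine hlim.continuous (Filter.Frequently.of_forall fun F => ?_)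
  simp only [partialSum, map_sum, fourierModulation_single]
  fun_prop

lemma Continuous.fourierModulation_apply {X : Type*} [TopologicalSpace X] {f : X → AddCircle T}
    {k : X → lp E 2} (hf : Continuous f) (hk : Continuous k) :
    Continuous fun a => fourierModulation (f a) (k a) := by
  refine continuous_iff_continuousAt.2 fun a₀ => ?_
  have hdiff : Filter.Tendsto (fun a => fourierModulation (f a) (k a - k a₀))
      (nhds a₀) (nhds 0) := by
    rw [tendsto_zero_iff_norm_tendsto_zero]
    simp_rw [LinearIsometry.norm_map]
    exact tendsto_zero_iff_norm_tendsto_zero.1 (by simpa using (hk.tendsto a₀).sub_const (k a₀))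
  unfold ContinuousAt
  simpa using hdiff.add (((continuous_fourierModulation_apply (k a₀)).comp hf).tendsto a₀)

end Modulation

variable {E F : ℤ → Type*} [∀ i, NormedAddCommGroup (E i)] [∀ i, NormedSpace ℂ (E i)]
  [∀ i, NormedAddCommGroup (F i)] [∀ i, NormedSpace ℂ (F i)]

noncomputable def fourierConj (A : lp E 2 →L[ℂ] lp F 2) (θ : AddCircle T) :
    lp E 2 →L[ℂ] lp F 2 :=
  (fourierModulation (-θ)).toContinuousLinearMap ∘L A ∘L
    (fourierModulation θ).toContinuousLinearMap

lemma norm_fourierConj_apply_le (A : lp E 2 →L[ℂ] lp F 2) (θ : AddCircle T) (x : lp E 2) :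
    ‖fourierConj A θ x‖ ≤ ‖A‖ * ‖x‖ := by
  simpa [fourierConj] using A.le_opNorm (fourierModulation θ x)

lemma continuous_fourierConj_apply (A : lp E 2 →L[ℂ] lp F 2) (x : lp E 2) :
    Continuous fun θ : AddCircle T => fourierConj A θ x :=
  continuous_neg.fourierModulation_apply (A.continuous.comp (continuous_fourierModulation_apply x))

lemma fourierConj_single_apply (A : lp E 2 →L[ℂ] lp F 2) (θ : AddCircle T) (i j : ℤ)
    (v : E j) :
    fourierConj A θ (lp.single 2 j v) i = fourier (-(i - j)) θ • A (lp.single 2 j v) i := by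
  simp only [fourierConj, ContinuousLinearMap.comp_apply,
    LinearIsometry.coe_toContinuousLinearMap, fourierModulation_single, map_smul, lp.coeFn_smul,
    Pi.smul_apply, fourierModulation_apply, smul_smul]
  have hneg : fourier i (-θ) = fourier (-i) θ := by
    simp only [fourier_apply, smul_neg, neg_smul]
  rw [hneg, ← fourier_add, neg_sub, sub_eq_add_neg, add_comm]

section Average

variable [Fact (0 < T)] {g : AddCircle T → ℂ} (hg : Integrable g haarAddCircle)
  (A : lp E 2 →L[ℂ] lp F 2)
include hg

lemma integrable_smul_fourierConj_apply (x : lp E 2) :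
    Integrable (fun θ => g θ • fourierConj A θ x) haarAddCircle := by
  refine (hg.norm.mul_const (‖A‖ * ‖x‖)).mono'
    (hg.aestronglyMeasurable.smul (continuous_fourierConj_apply A x).aestronglyMeasurable)
    (Filter.Eventually.of_forall fun θ => ?_)
  rw [norm_smul]
  exact mul_le_mul_of_nonneg_left (norm_fourierConj_apply_le A θ x) (norm_nonneg _)

noncomputable def fourierAverageₗ : lp E 2 →ₗ[ℂ] lp F 2 where
  toFun x := ∫ θ, g θ • fourierConj A θ x ∂haarAddCircle
  map_add' x y := by
    simp only [map_add, smul_add]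
    exact integral_add (integrable_smul_fourierConj_apply hg A x)
      (integrable_smul_fourierConj_apply hg A y)
  map_smul' c x := by
    simp only [map_smul, smul_comm (g _) c, integral_smul, RingHom.id_apply]

lemma norm_fourierAverageₗ_le (x : lp E 2) :
    ‖fourierAverageₗ hg A x‖ ≤ (∫ θ, ‖g θ‖ ∂haarAddCircle) * ‖A‖ * ‖x‖ := by
  calc ‖fourierAverageₗ hg A x‖ ≤ ∫ θ, ‖g θ‖ * (‖A‖ * ‖x‖) ∂haarAddCircle := by
        refine norm_integral_le_of_norm_le (hg.norm.mul_const _) (Filter.Eventually.of_forall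
          fun θ => ?_)
        rw [norm_smul]
        exact mul_le_mul_of_nonneg_left (norm_fourierConj_apply_le A θ x) (norm_nonneg _)
    _ = (∫ θ, ‖g θ‖ ∂haarAddCircle) * ‖A‖ * ‖x‖ := by rw [integral_mul_const, mul_assoc]

noncomputable def fourierAverage : lp E 2 →L[ℂ] lp F 2 :=
  (fourierAverageₗ hg A).mkContinuous _ (norm_fourierAverageₗ_le hg A)

lemma norm_fourierAverage_le :
    ‖fourierAverage hg A‖ ≤ (∫ θ, ‖g θ‖ ∂haarAddCircle) * ‖A‖ :=
  LinearMap.mkContinuous_norm_le _ (by positivity) _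

lemma fourierAverage_single_apply [∀ i, CompleteSpace (F i)] (i j : ℤ) (v : E j) :
    fourierAverage hg A (lp.single 2 j v) i =
      fourierCoeff g (i - j) • A (lp.single 2 j v) i := by
  change lp.evalCLM ℂ F 2 i (∫ θ, g θ • fourierConj A θ (lp.single 2 j v) ∂haarAddCircle) = _
  rw [← ContinuousLinearMap.integral_comp_comm _ (integrable_smul_fourierConj_apply hg A _),
    fourierCoeff, ← integral_smul_const]
  refine integral_congr_ae (Filter.Eventually.of_forall fun θ => ?_)
  simp only [lp.evalCLM, LinearMap.mkContinuous_apply, lp.evalₗ_apply, lp.coeFn_smul,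
    Pi.smul_apply, fourierConj_single_apply, smul_smul, smul_eq_mul, mul_comm]

end Average

end Transference

lemma MeasureTheory.Lp.integral_norm_le_norm {α V : Type*} [MeasurableSpace α] {μ : Measure α}
    [IsProbabilityMeasure μ] [NormedAddCommGroup V] {p : ℝ≥0∞} [Fact (1 ≤ p)] (f : Lp V p μ) :
    ∫ a, ‖f a‖ ∂μ ≤ ‖f‖ := by
  rw [integral_norm_eq_lintegral_enorm (Lp.aestronglyMeasurable f),
    ← eLpNorm_one_eq_lintegral_enorm, Lp.norm_def]
  exact ENNReal.toReal_mono (Lp.eLpNorm_ne_top f)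
    (eLpNorm_le_eLpNorm_of_exponent_le Fact.out (Lp.aestronglyMeasurable f))

open MeasureTheory AddCircle in
/-- For `t ∈ (0,1]`, every bounded operator `T : ⊕_{i∈ℤ} H_i → ⊕_{i∈ℤ} K_i` between
ℓ²-direct sums of Hilbert spaces admits a bounded operator `S` with matrix entries
`S_{ij} = φ_t(i,j)·T_{ij}` and `‖S‖ ≤ (π·(t^{1/2} + t^{−1/2})/√3)·‖T‖`. -/
theorem statement7 (t : ℝ) (ht0 : 0 < t) (ht1 : t ≤ 1) (T : lp H 2 →L[ℂ] lp K 2) :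
    ∃ S : lp H 2 →L[ℂ] lp K 2,
      (∀ (i j : ℤ) (v : H j), matrixEntry S i j v = phiMul t i j • matrixEntry T i j v) ∧
      ‖S‖ ≤ Real.pi * (t ^ ((1 : ℝ) / 2) + t ^ (-(1 : ℝ) / 2)) / Real.sqrt 3 * ‖T‖ := by
  have hconst : t ^ ((1 : ℝ) / 2) + t ^ (-(1 : ℝ) / 2) = √t + (√t)⁻¹ := by
    rw [neg_div, Real.rpow_neg ht0.le, ← Real.sqrt_eq_rpow]
  obtain ⟨c, hc, hc_norm⟩ := exists_lp_eq_phiMul_sq (Real.sqrt_pos.2 ht0)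
    (Real.sqrt_le_one.2 ht1)
  rw [Real.sq_sqrt ht0.le] at hc
  set g : Lp ℂ 2 (haarAddCircle (T := 1)) := fourierBasis.repr.symm c
  have hg : Integrable g haarAddCircle := (Lp.memLp g).integrable one_le_two
  have hĝ (n : ℤ) : fourierCoeff g n = phiMul t n 0 := by
    rw [← fourierBasis_repr, LinearIsometryEquiv.apply_symm_apply, hc]
  refine ⟨fourierAverage hg T, fun i j v => ?_, ?_⟩
  · simp only [matrixEntry, fourierAverage_single_apply, hĝ, phiMul_sub_zero]
  calc ‖fourierAverage hg T‖ ≤ (∫ θ, ‖g θ‖ ∂haarAddCircle) * ‖T‖ := norm_fourierAverage_le hg T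
    _ ≤ ‖c‖ * ‖T‖ := by
      gcongr
      exact (Lp.integral_norm_le_norm g).trans_eq (fourierBasis.repr.symm.norm_map c)
    _ ≤ _ := by rw [hconst]; gcongr
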